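/- Let n = p₁^{r₁}···p_m^{r_m} with distinct primes p_i and r_i ≥ 1. The clique number of the reduced graph of the power graph of the cyclic group Z_n equals 1 if m = 1, and equals r₁ + r₂ + ··· + r_m if m ≥ 2. -/

import Mathlib

/-- Closed neighborhood of a vertex. -/
def SimpleGraph.closedNbhd {V : Type*} (Γ : SimpleGraph V) (x : V) : Set V :=
  insert x (Γ.neighborSet x)

/-- `z` strongly resolves `x` and `y`: some shortest path from `z` to `x` contains `y`,
or some shortest path from `z` to `y` contains `x`. -/
def SimpleGraph.StronglyResolves {V : Type*} (Γ : SimpleGraph V) (z x y : V) : Prop :=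
  Γ.dist z y + Γ.dist y x = Γ.dist z x ∨ Γ.dist z x + Γ.dist x y = Γ.dist z y

def SimpleGraph.IsStrongResolvingSet {V : Type*} (Γ : SimpleGraph V) (S : Set V) : Prop :=
  ∀ x y : V, x ≠ y → ∃ z ∈ S, Γ.StronglyResolves z x y

/-- Strong metric dimension. -/
noncomputable def SimpleGraph.sdim {V : Type*} (Γ : SimpleGraph V) : ℕ :=
  sInf {k | ∃ S : Set V, Γ.IsStrongResolvingSet S ∧ S.ncard = k}

/-- Equivalence: equal closed neighborhoods. -/
def SimpleGraph.nbhdSetoid {V : Type*} (Γ : SimpleGraph V) : Setoid V :=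
  ⟨fun x y => Γ.closedNbhd x = Γ.closedNbhd y,
   ⟨fun _ => rfl, Eq.symm, Eq.trans⟩⟩

/-- The reduced graph of `Γ`. -/
def SimpleGraph.reduced {V : Type*} (Γ : SimpleGraph V) :
    SimpleGraph (Quotient Γ.nbhdSetoid) where
  Adj a b := a ≠ b ∧ ∃ x y : V,
    Quotient.mk Γ.nbhdSetoid x = a ∧ Quotient.mk Γ.nbhdSetoid y = b ∧ Γ.Adj x y
  symm := by
    refine ⟨?_⟩
    rintro a b ⟨h, x, y, hx, hy, hxy⟩
    exact ⟨h.symm, y, x, hy, hx, hxy.symm⟩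
  loopless := by refine ⟨?_⟩; rintro a ⟨h, -⟩; exact h rfl

/-- The power graph of a group. -/
def powerGraph (G : Type*) [Group G] : SimpleGraph G where
  Adj x y := x ≠ y ∧ (x ∈ Subgroup.zpowers y ∨ y ∈ Subgroup.zpowers x)
  symm := by refine ⟨?_⟩; rintro x y ⟨h, h2⟩; exact ⟨h.symm, h2.symm⟩
  loopless := by refine ⟨?_⟩; rintro x ⟨h, -⟩; exact h rfl

/-- `σ n`: 1 if `n` is a prime power, otherwise the sum of the exponents in the
prime factorization of `n`. -/
noncomputable def sigmaExp (n : ℕ) : ℕ :=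
  if IsPrimePow n then 1 else n.factorization.sum fun _ k => k

/-- A maximal cyclic subgroup. -/
def IsMaxCyclic {G : Type*} [Group G] (M : Subgroup G) : Prop :=
  IsCyclic M ∧ ∀ N : Subgroup G, IsCyclic N → M ≤ N → M = N

/-- The set `𝓜_p` of maximal cyclic subgroups that are `p`-groups. -/
def maxCycP (p : ℕ) (G : Type*) [Group G] : Set (Subgroup G) :=
  {M | IsMaxCyclic M ∧ IsPGroup p M}

/-- The set of intersections of `M` with members of `𝓜_p`. -/
def inters (p : ℕ) {G : Type*} [Group G] (M : Subgroup G) : Set (Subgroup G) :=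
  {C | ∃ N ∈ maxCycP p G, C = M ⊓ N}

/-- `s_i`: the number of distinct intersections. -/
noncomputable def sNum (p : ℕ) {G : Type*} [Group G] (M : Subgroup G) : ℕ :=
  Nat.card (inters p M)

open Classical in
/-- `λ_i`, defined by `p ^ λ_i = max {|M ⊓ N| : N maximal cyclic, not a p-group}`
if maximal cyclic non-`p`-subgroups exist, and `λ_i = -1` otherwise. -/
noncomputable def lamInt (p : ℕ) {G : Type*} [Group G] (M : Subgroup G) : ℤ :=
  if {N : Subgroup G | IsMaxCyclic N ∧ ¬ IsPGroup p N}.Nonempty then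
    (padicValNat p (sSup {k | ∃ N : Subgroup G, IsMaxCyclic N ∧ ¬ IsPGroup p N ∧
        k = Nat.card ↥(M ⊓ N)}) : ℤ)
  else -1

/-- `s_i'`: the least index `u` with `p ^ λ_i < |C_{iu}|` in the chain of intersections;
equivalently one more than the number of intersections of cardinality at most `p ^ λ_i`. -/
noncomputable def sPrimeNum (p : ℕ) {G : Type*} [Group G] (M : Subgroup G) : ℕ :=
  Nat.card {C | C ∈ inters p M ∧ (Nat.card ↥C : ℚ) ≤ (p : ℚ) ^ (lamInt p M)} + 1

noncomputable def alphaTerm (p : ℕ) {G : Type*} [Group G] (M : Subgroup G) : ℤ :=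
  (sNum p M : ℤ) - (sPrimeNum p M : ℤ) + lamInt p M + 2

/-- `α_p = max_i (s_i - s_i' + λ_i + 2)`, with `α_p = 0` when `𝓜_p = ∅`. -/
noncomputable def alphaP (p : ℕ) (G : Type*) [Group G] : ℤ :=
  sSup (alphaTerm p '' maxCycP p G)

/-- A CP-group: every nonidentity element has prime power order. -/
def IsCPGroup (G : Type*) [Group G] : Prop :=
  ∀ g : G, g ≠ 1 → IsPrimePow (orderOf g)

/-!
In a finite cyclic group `x ∈ ⟨y⟩` iff `orderOf x ∣ orderOf y`, so the closed neighbourhood of `x`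
in the power graph is the set of elements whose order is comparable with `orderOf x` under
divisibility. Elements of order `1` or `n` are adjacent to everything, so they form one vertex of
the reduced graph. When `n` has two distinct prime factors, any other two distinct divisors
`a ∣ b` are separated by some divisor `c` comparable with exactly one of them, so the remaining
vertices of the reduced graph correspond to the orders. A clique is then a divisibility chain of
divisors of `n` not containing both `1` and `n`; `Ω` is strictly monotone along such a chain, which
gives at most `Ω n` elements, and the prefix products of the prime factor list of `n` attain this.
When `n` is a prime power all orders are comparable and the reduced graph is a single vertex.
-/

open ArithmeticFunction
open scoped ArithmeticFunction.Omega

namespace SimpleGraph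

variable {V : Type*} (Γ : SimpleGraph V)

lemma adj_of_closedNbhd_eq {x x' y : V} (h : Γ.closedNbhd x = Γ.closedNbhd x') (hy : x' ≠ y)
    (hxy : Γ.Adj x y) : Γ.Adj x' y := by
  have hmem : y ∈ Γ.closedNbhd x' := h ▸ Set.mem_insert_of_mem x hxy
  exact (Set.mem_insert_iff.1 hmem).resolve_left hy.symm

lemma Adj.out_of_reduced {a b : Quotient Γ.nbhdSetoid} (h : Γ.reduced.Adj a b) :
    Γ.Adj a.out b.out := by
  obtain ⟨hne, x, y, rfl, rfl, hxy⟩ := h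
  have hx : Γ.closedNbhd x = Γ.closedNbhd (Quotient.mk Γ.nbhdSetoid x).out :=
    (Quotient.mk_out (s := Γ.nbhdSetoid) x).symm
  have hy : Γ.closedNbhd y = Γ.closedNbhd (Quotient.mk Γ.nbhdSetoid y).out :=
    (Quotient.mk_out (s := Γ.nbhdSetoid) y).symm
  have hxy' : Γ.Adj (Quotient.mk Γ.nbhdSetoid x).out y :=
    Γ.adj_of_closedNbhd_eq hx (fun h => hne (by rw [← h, Quotient.out_eq])) hxy
  refine (Γ.adj_of_closedNbhd_eq hy (fun h => hne ?_) hxy'.symm).symm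
  rw [← Quotient.out_eq (Quotient.mk Γ.nbhdSetoid x), ← h, Quotient.out_eq]

lemma eq_of_closedNbhd_out_eq {a b : Quotient Γ.nbhdSetoid}
    (h : Γ.closedNbhd a.out = Γ.closedNbhd b.out) : a = b := by
  rw [← Quotient.out_eq a, ← Quotient.out_eq b]
  exact Quotient.sound h

lemma cliqueNum_eq_one [Subsingleton V] [Nonempty V] : Γ.cliqueNum = 1 := by
  refine le_antisymm ?_ ?_
  · obtain ⟨s, hs⟩ := Γ.exists_isNClique_cliqueNum
    exact hs.card_eq ▸ Finset.card_le_one_of_subsingleton s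
  · exact IsClique.card_le_cliqueNum (t := {Classical.arbitrary V}) (tc := by simp)

end SimpleGraph

namespace ArithmeticFunction

lemma cardFactors_lt_of_dvd {a b : ℕ} (hab : a ∣ b) (hne : a ≠ b) (hb : b ≠ 0) : Ω a < Ω b := by
  obtain ⟨k, rfl⟩ := hab
  have ha : a ≠ 0 := left_ne_zero_of_mul hb
  have hk : 1 < k := by
    rcases k with _ | _ | k
    · simp at hb
    · simp at hne
    · omega
  rw [cardFactors_mul ha (right_ne_zero_of_mul hb)]
  have := cardFactors_pos_iff_one_lt.2 hk
  omega

lemma cardFactors_le_of_dvd {a b : ℕ} (hab : a ∣ b) (hb : b ≠ 0) : Ω a ≤ Ω b := by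
  rcases eq_or_ne a b with rfl | hne
  · exact le_rfl
  · exact (cardFactors_lt_of_dvd hab hne hb).le

lemma card_le_cardFactors_of_chain {N : ℕ} (hN : N ≠ 0) {S : Finset ℕ} (hdvd : ∀ a ∈ S, a ∣ N)
    (hchain : (S : Set ℕ).Pairwise fun a b => a ∣ b ∨ b ∣ a) (h1N : ¬(1 ∈ S ∧ N ∈ S)) :
    S.card ≤ Ω N := by
  have h0 : ∀ a ∈ S, a ≠ 0 := fun a ha h => hN (zero_dvd_iff.1 (h ▸ hdvd a ha))
  have hinj : Set.InjOn Ω S := by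
    intro a ha b hb hab
    by_contra hne
    rcases hchain ha hb hne with h | h
    · exact (cardFactors_lt_of_dvd h hne (h0 b hb)).ne hab
    · exact (cardFactors_lt_of_dvd h (Ne.symm hne) (h0 a ha)).ne hab.symm
  rw [← Finset.card_image_of_injOn hinj]
  rcases not_and_or.1 h1N with h1 | hN'
  · calc (S.image Ω).card ≤ (Finset.Icc 1 (Ω N)).card := by
          refine Finset.card_le_card fun k hk => ?_
          obtain ⟨a, ha, rfl⟩ := Finset.mem_image.1 hk
          have : 1 < a := by have := h0 a ha; have : a ≠ 1 := fun h => h1 (h ▸ ha); omega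
          exact Finset.mem_Icc.2 ⟨cardFactors_pos_iff_one_lt.2 this,
            cardFactors_le_of_dvd (hdvd a ha) hN⟩
      _ = Ω N := by simp
  · calc (S.image Ω).card ≤ (Finset.range (Ω N)).card := by
          refine Finset.card_le_card fun k hk => ?_
          obtain ⟨a, ha, rfl⟩ := Finset.mem_image.1 hk
          exact Finset.mem_range.2 (cardFactors_lt_of_dvd (hdvd a ha) (fun h => hN' (h ▸ ha)) hN)
      _ = Ω N := Finset.card_range _

lemma exists_chain_card_eq_cardFactors {N : ℕ} (hN : N ≠ 0) :
    ∃ S : Finset ℕ, S.card = Ω N ∧ 1 ∉ S ∧ (∀ a ∈ S, a ∣ N) ∧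
      (S : Set ℕ).Pairwise fun a b => a ∣ b ∨ b ∣ a := by
  set L := N.primeFactorsList
  have hprefix (j : ℕ) : Ω (L.take (j + 1)).prod = min (j + 1) (Ω N) := by
    rw [cardFactors_apply, cardFactors_apply, ← List.length_take]
    exact (Nat.primeFactorsList_unique rfl fun p hp =>
      Nat.prime_of_mem_primeFactorsList (List.mem_of_mem_take hp)).length_eq.symm
  refine ⟨(Finset.range (Ω N)).image fun j => (L.take (j + 1)).prod, ?_, ?_, ?_, ?_⟩
  · refine (Finset.card_image_of_injOn fun i hi j hj hij => ?_).trans (Finset.card_range _)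
    have := congrArg Ω hij
    simp only [hprefix] at this
    simp only [Finset.coe_range, Set.mem_Iio] at hi hj
    omega
  · intro h
    obtain ⟨j, hj, hj1⟩ := Finset.mem_image.1 h
    have := hprefix j
    rw [Finset.mem_range] at hj
    rw [hj1, cardFactors_one] at this
    omega
  · intro a ha
    obtain ⟨j, -, rfl⟩ := Finset.mem_image.1 ha
    exact Nat.prod_primeFactorsList hN ▸ (List.take_sublist _ _).prod_dvd_prod
  · intro a ha b hb _
    obtain ⟨i, -, rfl⟩ := Finset.mem_image.1 ha
    obtain ⟨j, -, rfl⟩ := Finset.mem_image.1 hb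
    rcases le_total i j with h | h
    · exact Or.inl (List.take_prefix_take_left (by omega)).sublist.prod_dvd_prod
    · exact Or.inr (List.take_prefix_take_left (by omega)).sublist.prod_dvd_prod

end ArithmeticFunction

namespace Nat

lemma exists_dvd_comparable_ne {N a b : ℕ} (hN : 1 < N.primeFactors.card) (hab : a ∣ b)
    (hbN : b ∣ N) (ha : a ≠ 1) (hne : a ≠ b) :
    ∃ c, c ∣ N ∧ ¬((a ∣ c ∨ c ∣ a) ↔ (b ∣ c ∨ c ∣ b)) := by
  have hN0 : N ≠ 0 := by rintro rfl; simp at hN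
  have hb0 : b ≠ 0 := ne_zero_of_dvd_ne_zero hN0 hbN
  have ha0 : a ≠ 0 := ne_zero_of_dvd_ne_zero hb0 hab
  by_cases hpow : IsPrimePow a
  · obtain ⟨t, e, ht, he, rfl⟩ := (isPrimePow_nat_iff _).1 hpow
    obtain ⟨s, hsN, hst⟩ := Finset.exists_mem_ne hN t
    have hs := prime_of_mem_primeFactors hsN
    have hsa : ¬s ∣ t ^ e := fun h => hst ((prime_dvd_prime_iff_eq hs ht).1 (hs.dvd_of_dvd_pow h))
    by_cases hsb : s ∣ b
    · refine ⟨s, dvd_of_mem_primeFactors hsN, fun hiff => ?_⟩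
      rcases hiff.2 (Or.inr hsb) with h | h
      · exact hst ((prime_dvd_prime_iff_eq ht hs).1 ((dvd_pow_self t he.ne').trans h)).symm
      · exact hsa h
    · have hcop : Coprime s (t ^ e) := (hs.coprime_iff_not_dvd).2 hsa
      refine ⟨s * t ^ e, hcop.mul_dvd_of_dvd_of_dvd (dvd_of_mem_primeFactors hsN)
        (hab.trans hbN), fun hiff => ?_⟩
      rcases hiff.1 (Or.inl (dvd_mul_left _ _)) with h | h
      · have hbs : Coprime b s := ((hs.coprime_iff_not_dvd).2 hsb).symm
        exact hne (Nat.dvd_antisymm hab (hbs.dvd_of_dvd_mul_left h))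
      · exact hsb ((dvd_mul_right s _).trans h)
  · obtain ⟨q, hlt⟩ : ∃ q, a.factorization q < b.factorization q := by
      by_contra! h
      exact hne (Nat.dvd_antisymm hab ((factorization_le_iff_dvd hb0 ha0).1 h))
    have hq : q.Prime := prime_of_mem_primeFactors (support_factorization b ▸
      Finsupp.mem_support_iff.2 (by omega))
    refine ⟨q ^ b.factorization q, (ordProj_dvd b q).trans hbN, fun hiff => ?_⟩
    rcases hiff.2 (Or.inr (ordProj_dvd b q)) with h | h
    · obtain ⟨k, -, rfl⟩ := (dvd_prime_pow hq).1 h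
      rcases k with _ | k
      · exact ha (pow_zero q)
      · exact hpow (hq.isPrimePow.pow k.succ_ne_zero)
    · have := (hq.pow_dvd_iff_le_factorization ha0).1 h
      omega

end Nat

section CyclicGroup

variable {G : Type*} [CommGroup G] [IsCyclic G] [Finite G]

lemma IsCyclic.mem_zpowers_iff_orderOf_dvd {x y : G} :
    x ∈ Subgroup.zpowers y ↔ orderOf x ∣ orderOf y := by
  refine ⟨orderOf_dvd_of_mem_zpowers, fun h => ?_⟩
  have hker : Subgroup.zpowers y = (powMonoidHom (orderOf y)).ker := by
    refine Subgroup.eq_of_le_of_card_ge ?_ ?_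
    · exact Subgroup.zpowers_le.2 (pow_orderOf_eq_one y)
    · rw [IsCyclic.card_powMonoidHom_ker, Nat.card_zpowers,
        Nat.gcd_eq_right (orderOf_dvd_natCard y)]
  rw [hker, MonoidHom.mem_ker, powMonoidHom_apply]
  exact orderOf_dvd_iff_pow_eq_one.1 h

lemma IsCyclic.exists_orderOf_eq {d : ℕ} (hd : d ∣ Nat.card G) : ∃ g : G, orderOf g = d := by
  obtain ⟨g, hg⟩ := IsCyclic.exists_ofOrder_eq_natCard (α := G)
  exact ⟨g ^ (orderOf g / d), orderOf_pow_orderOf_div (hg ▸ Nat.card_pos.ne') (hg ▸ hd)⟩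

lemma powerGraph_adj_iff {x y : G} :
    (powerGraph G).Adj x y ↔ x ≠ y ∧ (orderOf x ∣ orderOf y ∨ orderOf y ∣ orderOf x) := by
  simp only [powerGraph, IsCyclic.mem_zpowers_iff_orderOf_dvd]

lemma closedNbhd_powerGraph (x : G) :
    (powerGraph G).closedNbhd x = {z | orderOf x ∣ orderOf z ∨ orderOf z ∣ orderOf x} := by
  ext z
  rcases eq_or_ne x z with rfl | hne
  · simp [SimpleGraph.closedNbhd]
  · simp [SimpleGraph.closedNbhd, powerGraph_adj_iff, hne, hne.symm]

lemma closedNbhd_powerGraph_eq_univ {x : G}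
    (hx : ∀ d, d ∣ Nat.card G → orderOf x ∣ d ∨ d ∣ orderOf x) :
    (powerGraph G).closedNbhd x = Set.univ :=
  Set.eq_univ_of_forall fun z => by
    simpa [closedNbhd_powerGraph] using hx _ (orderOf_dvd_natCard z)

lemma closedNbhd_powerGraph_ne {x y : G} {c : ℕ} (hc : c ∣ Nat.card G)
    (h : ¬((orderOf x ∣ c ∨ c ∣ orderOf x) ↔ (orderOf y ∣ c ∨ c ∣ orderOf y))) :
    (powerGraph G).closedNbhd x ≠ (powerGraph G).closedNbhd y := by
  obtain ⟨g, rfl⟩ := IsCyclic.exists_orderOf_eq hc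
  intro heq
  exact h (by simpa [closedNbhd_powerGraph] using Set.ext_iff.1 heq g)

lemma cliqueNum_reduced_powerGraph_le (hG : Nat.card G ≠ 1) :
    (powerGraph G).reduced.cliqueNum ≤ Ω (Nat.card G) := by
  obtain ⟨t, ht⟩ := (powerGraph G).reduced.exists_isNClique_cliqueNum
  have hinj : Function.Injective fun a : Quotient (powerGraph G).nbhdSetoid => orderOf a.out :=
    fun a b h => (powerGraph G).eq_of_closedNbhd_out_eq (by simp only [closedNbhd_powerGraph, h])
  rw [← ht.card_eq, ← Finset.card_image_of_injective t hinj]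
  refine card_le_cardFactors_of_chain Nat.card_pos.ne' ?_ ?_ ?_
  · intro d hd
    obtain ⟨a, -, rfl⟩ := Finset.mem_image.1 hd
    exact orderOf_dvd_natCard _
  · intro _ hd _ he hne
    obtain ⟨a, ha, rfl⟩ := Finset.mem_image.1 hd
    obtain ⟨b, hb, rfl⟩ := Finset.mem_image.1 he
    exact (powerGraph_adj_iff.1 (ht.isClique ha hb fun h => hne (h ▸ rfl)).out_of_reduced).2
  · rintro ⟨h1, hN⟩
    obtain ⟨a, -, ha⟩ := Finset.mem_image.1 h1
    obtain ⟨b, -, hb⟩ := Finset.mem_image.1 hN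
    have hab : a = b := (powerGraph G).eq_of_closedNbhd_out_eq <| by
      rw [closedNbhd_powerGraph_eq_univ fun d _ => Or.inl (ha ▸ one_dvd d),
        closedNbhd_powerGraph_eq_univ fun d hd => Or.inr (hb ▸ hd)]
    exact hG (hb.symm.trans (hab ▸ ha))

lemma le_cliqueNum_reduced_powerGraph (hG : 1 < (Nat.card G).primeFactors.card) :
    Ω (Nat.card G) ≤ (powerGraph G).reduced.cliqueNum := by
  classical
  obtain ⟨S, hcard, h1, hdvd, hchain⟩ :=
    exists_chain_card_eq_cardFactors (Nat.card_pos (α := G)).ne'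
  choose! g hg using fun d (hd : d ∣ Nat.card G) => IsCyclic.exists_orderOf_eq (G := G) hd
  have hg' : ∀ d ∈ S, orderOf (g d) = d := fun d hd => hg d (hdvd d hd)
  have hsep : ∀ {a b}, a ∈ S → b ∈ S → a ∣ b → a ≠ b →
      (powerGraph G).closedNbhd (g a) ≠ (powerGraph G).closedNbhd (g b) := by
    intro a b ha hb hab hne
    obtain ⟨c, hc, hac⟩ :=
      Nat.exists_dvd_comparable_ne hG hab (hdvd b hb) (fun h => h1 (h ▸ ha)) hne
    exact closedNbhd_powerGraph_ne hc (by rwa [hg' a ha, hg' b hb])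
  have hinj : Set.InjOn (fun d => Quotient.mk (powerGraph G).nbhdSetoid (g d)) S := by
    intro a ha b hb hab
    by_contra hne
    rcases hchain ha hb hne with h | h
    · exact hsep ha hb h hne (Quotient.exact hab)
    · exact hsep hb ha h (Ne.symm hne) (Quotient.exact hab).symm
  rw [← hcard, ← Finset.card_image_of_injOn hinj]
  refine SimpleGraph.IsClique.card_le_cliqueNum (tc := fun _ hx _ hy hne => ?_)
  obtain ⟨a, ha, rfl⟩ := Finset.mem_image.1 hx
  obtain ⟨b, hb, rfl⟩ := Finset.mem_image.1 hy
  have hab : a ≠ b := fun h => hne (h ▸ rfl)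
  refine ⟨hne, g a, g b, rfl, rfl, powerGraph_adj_iff.2 ⟨fun h => hab ?_, ?_⟩⟩
  · rw [← hg' a ha, h, hg' b hb]
  · rw [hg' a ha, hg' b hb]
    exact hchain ha hb hab

theorem cliqueNum_reduced_powerGraph (hG : 1 < (Nat.card G).primeFactors.card) :
    (powerGraph G).reduced.cliqueNum = Ω (Nat.card G) := by
  refine le_antisymm (cliqueNum_reduced_powerGraph_le fun h => ?_)
    (le_cliqueNum_reduced_powerGraph hG)
  simp [h] at hG

theorem cliqueNum_reduced_powerGraph_of_card_eq_prime_pow {p k : ℕ} (hp : p.Prime)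
    (hG : Nat.card G = p ^ k) : (powerGraph G).reduced.cliqueNum = 1 := by
  have huniv (x : G) : (powerGraph G).closedNbhd x = Set.univ := by
    refine closedNbhd_powerGraph_eq_univ fun d hd => ?_
    obtain ⟨i, -, hi⟩ := (Nat.dvd_prime_pow hp).1 (hG ▸ orderOf_dvd_natCard x)
    obtain ⟨j, -, rfl⟩ := (Nat.dvd_prime_pow hp).1 (hG ▸ hd)
    rw [hi]
    exact (le_total i j).imp (pow_dvd_pow p) (pow_dvd_pow p)
  have : Nonempty (Quotient (powerGraph G).nbhdSetoid) := ⟨Quotient.mk _ 1⟩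
  have : Subsingleton (Quotient (powerGraph G).nbhdSetoid) :=
    ⟨fun a b => (powerGraph G).eq_of_closedNbhd_out_eq (by rw [huniv, huniv])⟩
  exact (powerGraph G).reduced.cliqueNum_eq_one

end CyclicGroup

theorem stmt_2 (m : ℕ) (hm : 1 ≤ m) (p r : Fin m → ℕ) (hp : ∀ i, (p i).Prime)
    (hinj : Function.Injective p) (hr : ∀ i, 1 ≤ r i)
    (n : ℕ) (hn : n = ∏ i, p i ^ r i) :
    (powerGraph (Multiplicative (ZMod n))).reduced.cliqueNum =
      if m = 1 then 1 else ∑ i, r i := by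
  have hn0 : n ≠ 0 := hn ▸ Finset.prod_ne_zero_iff.2 fun i _ => pow_ne_zero _ (hp i).ne_zero
  have : NeZero n := ⟨hn0⟩
  have hcard : Nat.card (Multiplicative (ZMod n)) = n := by simp
  split_ifs with hm1
  · subst hm1
    exact cliqueNum_reduced_powerGraph_of_card_eq_prime_pow (hp 0) (k := r 0)
      (by rw [hcard, hn, Fin.prod_univ_one])
  have hmem (i : Fin m) : p i ∈ n.primeFactors := Nat.mem_primeFactors.2 ⟨hp i,
    hn ▸ (dvd_pow_self _ (Nat.one_le_iff_ne_zero.1 (hr i))).trans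
      (Finset.dvd_prod_of_mem _ (Finset.mem_univ i)), hn0⟩
  have htwo : 1 < n.primeFactors.card := Finset.one_lt_card.2
    ⟨_, hmem ⟨0, by omega⟩, _, hmem ⟨1, by omega⟩, hinj.ne (by simp [Fin.ext_iff])⟩
  have hΩ : Ω n = ∑ i, r i := by
    rw [hn, Finset.prod_eq_multiset_prod, cardFactors_multiset_prod
      (by rwa [← Finset.prod_eq_multiset_prod, ← hn]), Multiset.map_map]
    simp [hp, Finset.sum_eq_multiset_sum]
  rw [cliqueNum_reduced_powerGraph (by rwa [hcard]), hcard, hΩ]
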